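/- For each t with 1 ≤ t ≤ K, the maximum value of f_t is m_t = (2t-1)!, attained when r_{K-(t-1)} = ⋯ = r_K = 1, and its minimum value is 0, attained when all r-arguments and all b-arguments are 0. -/

import Mathlib

/-- The hard function `f_t` for the matroid lower bound. The arguments `r b : ℕ → ℕ`
give, for each class `i ∈ {1, …, K}`, the number `r i ∈ {0,1}` of red elements and the
number `b i` of blue elements of class `i` in the set (only indices
`K-(t-1), …, K` are relevant for `f_t`). With `b̂ i = min (b i) (2(K-i))`,
`m_t = (2t-1)!`, `δ_{t-1} = m_{t-1} - f_{t-1}(r; b̂)`, `d_t = 2(t-1) - b̂ (K-(t-1))`,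
`s_t = 1 - r (K-(t-1))`, and `a_t = 2 m_{t-1} s_t + δ_{t-1} (d_t - 1)`,
we have `f_1(r; b) = r K` and `f_t(r; b) = m_t - a_t * d_t` for `t ≥ 2`. -/
def fMat (K : ℕ) : ℕ → (ℕ → ℕ) → (ℕ → ℕ) → ℤ
  | 0, _, _ => 0
  | 1, r, _ => (r K : ℤ)
  | (t + 2), r, b =>
    let bh : ℕ → ℕ := fun i => min (b i) (2 * (K - i))
    let δ : ℤ := (Nat.factorial (2 * (t + 1) - 1) : ℤ) - fMat K (t + 1) r bh
    let d : ℤ := 2 * ((t : ℤ) + 1) - (bh (K - (t + 1)) : ℤ)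
    let s : ℤ := 1 - (r (K - (t + 1)) : ℤ)
    (Nat.factorial (2 * (t + 2) - 1) : ℤ) -
      (2 * (Nat.factorial (2 * (t + 1) - 1) : ℤ) * s + δ * (d - 1)) * d

/-!
Write `f_{t+1} = m_{t+1} - a d` with `m_{t+1} = 2t (2t+1) m_t`. By induction `0 ≤ f_t ≤ m_t`, so
`0 ≤ δ ≤ m_t`; together with `0 ≤ s ≤ 1` and `0 ≤ d ≤ 2t` this gives `0 ≤ a d ≤ m_t (d+1) d ≤ m_{t+1}`.
All red elements force `s = δ = 0`, hence `a = 0`; no red and no blue elements force `s = 1`,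
`δ = m_t`, `d = 2t`, hence `a d = m_{t+1}`.
-/

open Nat

/-- The term `a_t · d_t` subtracted from `m_t` in the recursion for `f_t`. -/
def penalty (m δ s d : ℤ) : ℤ := (2 * m * s + δ * (d - 1)) * d

theorem penalty_nonneg {m δ s d : ℤ} (hm : 0 ≤ m) (hδ : 0 ≤ δ) (hs : 0 ≤ s) (hd : 0 ≤ d) :
    0 ≤ penalty m δ s d := by
  unfold penalty
  rcases (show d = 0 ∨ 1 ≤ d by omega) with rfl | hd1
  · simp
  · have : 0 ≤ δ * (d - 1) := mul_nonneg hδ (by linarith)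
    positivity

theorem penalty_le {m δ s d n : ℤ} (hm : 0 ≤ m) (hδ : δ ≤ m) (hs : s ≤ 1) (hd : 0 ≤ d)
    (hdn : d ≤ n) : penalty m δ s d ≤ m * n * (n + 1) := by
  unfold penalty
  have hn : 0 ≤ n := hd.trans hdn
  rcases (show d = 0 ∨ 1 ≤ d by omega) with rfl | hd1
  · simp only [mul_zero]
    positivity
  · have hms : 2 * m * s ≤ 2 * m := by nlinarith
    have hδd : δ * (d - 1) ≤ m * (d - 1) := mul_le_mul_of_nonneg_right hδ (by linarith)
    calc (2 * m * s + δ * (d - 1)) * d ≤ (2 * m + m * (d - 1)) * d :=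
          mul_le_mul_of_nonneg_right (by linarith) hd
      _ = m * d * (d + 1) := by ring
      _ ≤ m * n * (n + 1) := by gcongr

theorem factorial_two_mul_add_two_sub_one (t : ℕ) :
    ((2 * (t + 2) - 1)! : ℤ) =
      (2 * (t + 1) - 1)! * (2 * ((t : ℤ) + 1)) * (2 * ((t : ℤ) + 1) + 1) := by
  rw [show 2 * (t + 2) - 1 = 2 * t + 1 + 1 + 1 by omega,
    show 2 * (t + 1) - 1 = 2 * t + 1 by omega, factorial_succ, factorial_succ]
  push_cast
  ring

theorem fMat_add_two (K t : ℕ) (r b : ℕ → ℕ) :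
    fMat K (t + 2) r b = ((2 * (t + 2) - 1)! : ℤ) -
      penalty ((2 * (t + 1) - 1)! : ℤ)
        ((2 * (t + 1) - 1)! - fMat K (t + 1) r fun i => min (b i) (2 * (K - i)))
        (1 - r (K - (t + 1)))
        (2 * ((t : ℤ) + 1) - (min (b (K - (t + 1))) (2 * (K - (K - (t + 1)))) : ℕ)) :=
  rfl

theorem fMat_bounds (K t : ℕ) (r b : ℕ → ℕ) (hr : ∀ i, r i ≤ 1) :
    0 ≤ fMat K (t + 1) r b ∧ fMat K (t + 1) r b ≤ ((2 * (t + 1) - 1)! : ℤ) := by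
  induction t generalizing b with
  | zero => simpa [fMat] using hr K
  | succ t ih =>
    obtain ⟨hF0, hFM⟩ := ih fun i => min (b i) (2 * (K - i))
    have hM : (0 : ℤ) ≤ (2 * (t + 1) - 1)! := by positivity
    have hr' : ((r (K - (t + 1)) : ℕ) : ℤ) ≤ 1 := by exact_mod_cast hr _
    -- the cap `b̂ i ≤ 2 (K - i)` keeps `d_{t+2}` nonnegative
    have hcap :
        ((min (b (K - (t + 1))) (2 * (K - (K - (t + 1)))) : ℕ) : ℤ) ≤ 2 * ((t : ℤ) + 1) := by
      omega
    rw [fMat_add_two, factorial_two_mul_add_two_sub_one]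
    constructor
    · have := penalty_le hM (sub_le_self _ hF0)
        (sub_le_self 1 (Nat.cast_nonneg (r (K - (t + 1))))) (sub_nonneg.2 hcap)
        (sub_le_self _ (Nat.cast_nonneg _))
      linarith
    · have := penalty_nonneg hM (sub_nonneg.2 hFM) (sub_nonneg.2 hr') (sub_nonneg.2 hcap)
      linarith

theorem fMat_all_red (K t : ℕ) (b : ℕ → ℕ) :
    fMat K (t + 1) (fun _ => 1) b = ((2 * (t + 1) - 1)! : ℤ) := by
  induction t generalizing b with
  | zero => simp [fMat]
  | succ t ih => simp [fMat_add_two, ih, penalty]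

theorem fMat_no_red_no_blue (K t : ℕ) : fMat K (t + 1) (fun _ => 0) (fun _ => 0) = 0 := by
  induction t with
  | zero => simp [fMat]
  | succ t ih =>
    simp only [fMat_add_two, Nat.zero_min, ih, factorial_two_mul_add_two_sub_one, penalty]
    push_cast
    ring

theorem fMat_max_min_general (K t : ℕ) (ht1 : 1 ≤ t) :
    (∀ r b : ℕ → ℕ, (∀ i, r i ≤ 1) →
      fMat K t r b ≤ (Nat.factorial (2 * t - 1) : ℤ) ∧ 0 ≤ fMat K t r b) ∧
    (∀ b : ℕ → ℕ, fMat K t (fun _ => 1) b = (Nat.factorial (2 * t - 1) : ℤ)) ∧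
    fMat K t (fun _ => 0) (fun _ => 0) = 0 := by
  obtain ⟨t, rfl⟩ : ∃ n, t = n + 1 := ⟨t - 1, by omega⟩
  exact ⟨fun r b hr => (fMat_bounds K t r b hr).symm, fMat_all_red K t, fMat_no_red_no_blue K t⟩

theorem fMat_max_min (K t : ℕ) (ht1 : 1 ≤ t) (htK : t ≤ K) :
    (∀ r b : ℕ → ℕ, (∀ i, r i ≤ 1) →
      fMat K t r b ≤ (Nat.factorial (2 * t - 1) : ℤ) ∧ 0 ≤ fMat K t r b) ∧
    (∀ b : ℕ → ℕ, fMat K t (fun _ => 1) b = (Nat.factorial (2 * t - 1) : ℤ)) ∧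
    fMat K t (fun _ => 0) (fun _ => 0) = 0 :=
  fMat_max_min_general K t ht1
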